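/- arXiv:1704.08574 — 2 statements merged into one kernel-verified Lean document; each statement's English description precedes it below -/
import Mathlib

section
/- Let φ be a finite signed measure on ℝ concentrated on (0,∞) with |φ|((0,∞)) < 1 and let θ ∈ L²(ℝ) vanish on (−∞,0). Let ψ ∈ L²(ℝ) be the L²-limit of the series Σ_{n=0}^∞ θ∗φ^{∗n}. Then ψ satisfies the fixed-point equation ψ(t) = ∫_{(0,∞)} ψ(t−u) dφ(u) + θ(t) for Lebesgue-almost all t ∈ ℝ. -/
/-!
The partial sums `S_N = ∑_{n<N} θ ∗ φ^{∗n}` satisfy `S_{N+1} = θ + S_N ∗ φ` almost everywhere,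
because `(θ ∗ φ^{∗n}) ∗ φ = θ ∗ φ^{∗(n+1)}` by Fubini. Convolution with a finite measure `μ` is
bounded on `Lᵖ`, `‖f ∗ μ‖_p ≤ μ(ℝ) ‖f‖_p` (Hölder on each fibre, then Tonelli and translation
invariance of Lebesgue measure), so the recursion passes to the `L²`-limit and gives
`ψ = ψ ∗ φ + θ` almost everywhere.
-/

open MeasureTheory Complex Set Filter
open scoped ENNReal Topology

/-- The `n`-fold convolution power of the finite signed measure `φ = φp - φm`, represented
as a pair (positive part, negative part): `φ^{∗0} = δ₀` and `φ^{∗(n+1)} = φ^{∗n} ∗ φ`. -/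
noncomputable def convPow (φp φm : Measure ℝ) : ℕ → Measure ℝ × Measure ℝ
  | 0 => (Measure.dirac 0, 0)
  | n + 1 =>
      ((convPow φp φm n).1.conv φp + (convPow φp φm n).2.conv φm,
       (convPow φp φm n).1.conv φm + (convPow φp φm n).2.conv φp)

/-- `θ ∗ μ (t) = ∫ θ(t-u) dμ(u)` for the signed measure `μ = μ.1 - μ.2`. -/
noncomputable def convKernel (θ : ℝ → ℝ) (μ : Measure ℝ × Measure ℝ) (t : ℝ) : ℝ :=
  (∫ u : ℝ, θ (t - u) ∂μ.1) - ∫ u : ℝ, θ (t - u) ∂μ.2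


namespace MeasureTheory

noncomputable def convMeasure {G E : Type*} [Sub G] [MeasurableSpace G] [NormedAddCommGroup E]
    [NormedSpace ℝ E] (f : G → E) (μ : Measure G) (t : G) : E :=
  ∫ u, f (t - u) ∂μ

theorem lintegral_enorm_rpow_le {α E : Type*} [MeasurableSpace α] [NormedAddCommGroup E]
    {μ : Measure α} [IsFiniteMeasure μ] {h : α → E} (hh : AEStronglyMeasurable h μ) {q : ℝ}
    (hq : 1 ≤ q) :
    (∫⁻ x, ‖h x‖ₑ ∂μ) ^ q ≤ μ univ ^ (q - 1) * ∫⁻ x, ‖h x‖ₑ ^ q ∂μ := by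
  have hq0 : 0 < q := zero_lt_one.trans_le hq
  have hholder := eLpNorm_le_eLpNorm_mul_rpow_measure_univ (p := 1) (q := ENNReal.ofReal q)
    (by simpa using hq) hh
  rw [eLpNorm_one_eq_lintegral_enorm,
    eLpNorm_eq_lintegral_rpow_enorm_toReal (by simpa using hq0) ENNReal.ofReal_ne_top,
    ENNReal.toReal_ofReal hq0.le] at hholder
  calc (∫⁻ x, ‖h x‖ₑ ∂μ) ^ q
      ≤ ((∫⁻ x, ‖h x‖ₑ ^ q ∂μ) ^ (1 / q) * μ univ ^ (1 / (1 : ℝ≥0∞).toReal - 1 / q)) ^ q :=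
        ENNReal.rpow_le_rpow hholder hq0.le
    _ = μ univ ^ (q - 1) * ∫⁻ x, ‖h x‖ₑ ^ q ∂μ := by
        rw [ENNReal.mul_rpow_of_nonneg _ _ hq0.le, ← ENNReal.rpow_mul, ← ENNReal.rpow_mul,
          mul_comm]
        congr 2 <;> field_simp <;> simp

section ConvMeasure

variable {G E : Type*} [AddCommGroup G] [MeasurableSpace G] [MeasurableAdd₂ G] [MeasurableNeg G]
  [NormedAddCommGroup E] {ν : Measure G} [SFinite ν] [ν.IsAddRightInvariant] {f g : G → E}
  {p : ℝ≥0∞}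

theorem AEStronglyMeasurable.comp_sub_prod (hf : AEStronglyMeasurable f ν) (μ : Measure G)
    [SFinite μ] :
    AEStronglyMeasurable (fun x : G × G => f (x.1 - x.2)) (ν.prod μ) :=
  hf.comp_quasiMeasurePreserving (quasiMeasurePreserving_sub_of_right_invariant ν μ)

theorem lintegral_lintegral_comp_sub {μ : Measure G} [SFinite μ] {g : G → ℝ≥0∞}
    (hg : AEMeasurable g ν) :
    ∫⁻ t, ∫⁻ u, g (t - u) ∂μ ∂ν = μ univ * ∫⁻ t, g t ∂ν := by
  have hG : AEMeasurable (fun x : G × G => g (x.1 - x.2)) (ν.prod μ) :=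
    hg.comp_quasiMeasurePreserving (quasiMeasurePreserving_sub_of_right_invariant ν μ)
  rw [← lintegral_prod _ hG, lintegral_prod_symm _ hG]
  simp_rw [lintegral_sub_right_eq_self g]
  rw [lintegral_const, mul_comm]

theorem MemLp.ae_memLp_comp_sub (hf : MemLp f p ν) (hp0 : p ≠ 0) (hp : p ≠ ∞)
    (μ : Measure G) [IsFiniteMeasure μ] : ∀ᵐ t ∂ν, MemLp (fun u => f (t - u)) p μ := by
  have hprod := hf.1.comp_sub_prod μ
  have hfin : ∫⁻ t, ∫⁻ u, ‖f (t - u)‖ₑ ^ p.toReal ∂μ ∂ν ≠ ∞ := by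
    rw [lintegral_lintegral_comp_sub (hf.1.enorm.pow_const _)]
    exact ENNReal.mul_ne_top (measure_ne_top μ _)
      (lintegral_rpow_enorm_lt_top_of_eLpNorm_lt_top hp0 hp hf.2).ne
  filter_upwards [ae_lt_top' (hprod.enorm.pow_const _).lintegral_prod_right' hfin,
    hprod.prodMk_left] with t ht hmeas
  exact ⟨hmeas, (eLpNorm_lt_top_iff_lintegral_rpow_enorm_lt_top hp0 hp).2 ht⟩

theorem MemLp.ae_integrable_comp_sub (hf : MemLp f p ν) (hp1 : 1 ≤ p) (hp : p ≠ ∞)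
    (μ : Measure G) [IsFiniteMeasure μ] : ∀ᵐ t ∂ν, Integrable (fun u => f (t - u)) μ :=
  (hf.ae_memLp_comp_sub (one_pos.trans_le hp1).ne' hp μ).mono fun _ ht => ht.integrable hp1

variable [NormedSpace ℝ E] {μ : Measure G} [IsFiniteMeasure μ]

theorem eLpNorm_convMeasure_le (hf : MemLp f p ν) (hp1 : 1 ≤ p) (hp : p ≠ ∞) :
    eLpNorm (convMeasure f μ) p ν ≤ μ univ * eLpNorm f p ν := by
  set q := p.toReal
  have hq : 1 ≤ q := by simpa using ENNReal.toReal_mono hp hp1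
  have hq0 : 0 < q := one_pos.trans_le hq
  have hprod := hf.1.comp_sub_prod μ
  have hpoint : ∀ᵐ t ∂ν,
      ‖convMeasure f μ t‖ₑ ^ q ≤ μ univ ^ (q - 1) * ∫⁻ u, ‖f (t - u)‖ₑ ^ q ∂μ := by
    filter_upwards [hprod.prodMk_left] with t ht
    exact (ENNReal.rpow_le_rpow (enorm_integral_le_lintegral_enorm _) hq0.le).trans
      (lintegral_enorm_rpow_le ht hq)
  have hpow : μ univ ^ (q - 1) * μ univ = μ univ ^ q := by
    simpa using (ENNReal.rpow_add_of_nonneg (x := μ univ) (q - 1) 1 (by linarith) zero_le_one).symm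
  have hint : ∫⁻ t, ‖convMeasure f μ t‖ₑ ^ q ∂ν ≤ μ univ ^ q * ∫⁻ t, ‖f t‖ₑ ^ q ∂ν :=
    calc ∫⁻ t, ‖convMeasure f μ t‖ₑ ^ q ∂ν
        ≤ ∫⁻ t, μ univ ^ (q - 1) * ∫⁻ u, ‖f (t - u)‖ₑ ^ q ∂μ ∂ν := lintegral_mono_ae hpoint
      _ = μ univ ^ q * ∫⁻ t, ‖f t‖ₑ ^ q ∂ν := by
        rw [lintegral_const_mul' _ _ (ENNReal.rpow_ne_top_of_nonneg (by linarith)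
          (measure_ne_top μ _)), lintegral_lintegral_comp_sub (hf.1.enorm.pow_const _),
          ← mul_assoc, hpow]
  have hp0 : p ≠ 0 := (one_pos.trans_le hp1).ne'
  rw [eLpNorm_eq_lintegral_rpow_enorm_toReal hp0 hp, eLpNorm_eq_lintegral_rpow_enorm_toReal hp0 hp]
  calc (∫⁻ t, ‖convMeasure f μ t‖ₑ ^ q ∂ν) ^ (1 / q)
      ≤ (μ univ ^ q * ∫⁻ t, ‖f t‖ₑ ^ q ∂ν) ^ (1 / q) := ENNReal.rpow_le_rpow hint (by positivity)
    _ = μ univ * (∫⁻ t, ‖f t‖ₑ ^ q ∂ν) ^ (1 / q) := by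
      rw [ENNReal.mul_rpow_of_nonneg _ _ (by positivity), ← ENNReal.rpow_mul,
        mul_one_div_cancel hq0.ne', ENNReal.rpow_one]

theorem MemLp.convMeasure (hf : MemLp f p ν) (hp1 : 1 ≤ p) (hp : p ≠ ∞) :
    MemLp (convMeasure f μ) p ν :=
  ⟨(hf.1.comp_sub_prod μ).integral_prod_right',
    (eLpNorm_convMeasure_le hf hp1 hp).trans_lt (ENNReal.mul_lt_top (measure_lt_top μ _) hf.2)⟩

theorem convMeasure_sub_ae (hf : MemLp f p ν) (hg : MemLp g p ν) (hp1 : 1 ≤ p) (hp : p ≠ ∞) :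
    convMeasure (f - g) μ =ᵐ[ν] convMeasure f μ - convMeasure g μ := by
  filter_upwards [hf.ae_integrable_comp_sub hp1 hp μ, hg.ae_integrable_comp_sub hp1 hp μ]
    with t hft hgt
  exact integral_sub hft hgt

theorem convMeasure_finsetSum_ae {ι : Type*} {F : ι → G → E} (s : Finset ι)
    (hF : ∀ i ∈ s, MemLp (F i) p ν) (hp1 : 1 ≤ p) (hp : p ≠ ∞) :
    convMeasure (fun t => ∑ i ∈ s, F i t) μ =ᵐ[ν] fun t => ∑ i ∈ s, convMeasure (F i) μ t := by
  have hint : ∀ᵐ t ∂ν, ∀ i ∈ s, Integrable (fun u => F i (t - u)) μ :=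
    (ae_ball_iff s.countable_toSet).2 fun i hi => (hF i hi).ae_integrable_comp_sub hp1 hp μ
  filter_upwards [hint] with t ht
  exact integral_finsetSum s ht

theorem convMeasure_add_measure_ae (hf : MemLp f p ν) (hp1 : 1 ≤ p) (hp : p ≠ ∞)
    (μ' : Measure G) [IsFiniteMeasure μ'] :
    convMeasure f (μ + μ') =ᵐ[ν] convMeasure f μ + convMeasure f μ' := by
  filter_upwards [hf.ae_integrable_comp_sub hp1 hp μ, hf.ae_integrable_comp_sub hp1 hp μ']
    with t ht ht'
  exact integral_add_measure ht ht'

theorem convMeasure_conv_ae (hf : MemLp f p ν) (hp1 : 1 ≤ p) (hp : p ≠ ∞)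
    (μ' : Measure G) [IsFiniteMeasure μ'] :
    convMeasure f (μ ∗ μ') =ᵐ[ν] convMeasure (convMeasure f μ) μ' := by
  filter_upwards [hf.ae_integrable_comp_sub hp1 hp (μ ∗ μ')] with t ht
  rw [Measure.conv_comm] at ht
  simp only [convMeasure, Measure.conv_comm μ, integral_conv ht, sub_add_eq_sub_sub]

end ConvMeasure

end MeasureTheory

section ConvKernel

variable {p : ℝ≥0∞} {f g θ ψ : ℝ → ℝ} {μ φ : Measure ℝ × Measure ℝ}
  [IsFiniteMeasure μ.1] [IsFiniteMeasure μ.2]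

theorem convKernel_eq (f : ℝ → ℝ) (μ : Measure ℝ × Measure ℝ) :
    convKernel f μ = convMeasure f μ.1 - convMeasure f μ.2 :=
  rfl

theorem memLp_convKernel (hf : MemLp f p) (hp1 : 1 ≤ p) (hp : p ≠ ∞) :
    MemLp (convKernel f μ) p := by
  rw [convKernel_eq]
  exact (hf.convMeasure hp1 hp).sub (hf.convMeasure hp1 hp)

theorem eLpNorm_convKernel_le (hf : MemLp f p) (hp1 : 1 ≤ p) (hp : p ≠ ∞) :
    eLpNorm (convKernel f μ) p ≤ (μ.1 univ + μ.2 univ) * eLpNorm f p := by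
  rw [convKernel_eq, add_mul]
  exact (eLpNorm_sub_le (hf.convMeasure hp1 hp).1 (hf.convMeasure hp1 hp).1 hp1).trans
    (add_le_add (eLpNorm_convMeasure_le hf hp1 hp) (eLpNorm_convMeasure_le hf hp1 hp))

theorem convKernel_sub_ae (hf : MemLp f p) (hg : MemLp g p) (hp1 : 1 ≤ p) (hp : p ≠ ∞) :
    convKernel (f - g) μ =ᵐ[volume] convKernel f μ - convKernel g μ := by
  filter_upwards [convMeasure_sub_ae (μ := μ.1) hf hg hp1 hp,
    convMeasure_sub_ae (μ := μ.2) hf hg hp1 hp] with t h₁ h₂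
  simp only [convKernel_eq, Pi.sub_apply] at h₁ h₂ ⊢
  rw [h₁, h₂]
  ring

theorem convKernel_finsetSum_ae {ι : Type*} {F : ι → ℝ → ℝ} (s : Finset ι)
    (hF : ∀ i ∈ s, MemLp (F i) p) (hp1 : 1 ≤ p) (hp : p ≠ ∞) :
    convKernel (fun t => ∑ i ∈ s, F i t) μ =ᵐ[volume] fun t => ∑ i ∈ s, convKernel (F i) μ t := by
  filter_upwards [convMeasure_finsetSum_ae (μ := μ.1) s hF hp1 hp,
    convMeasure_finsetSum_ae (μ := μ.2) s hF hp1 hp] with t h₁ h₂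
  simp only [convKernel_eq, Pi.sub_apply] at h₁ h₂ ⊢
  rw [h₁, h₂, Finset.sum_sub_distrib]

/-- The pair on the left decomposes the signed measure `(μ.1 - μ.2) ∗ (φ.1 - φ.2)`, as in the
recursion defining `convPow`. -/
theorem convKernel_conv_ae [IsFiniteMeasure φ.1] [IsFiniteMeasure φ.2] (hθ : MemLp θ p)
    (hp1 : 1 ≤ p) (hp : p ≠ ∞) :
    convKernel θ (μ.1 ∗ φ.1 + μ.2 ∗ φ.2, μ.1 ∗ φ.2 + μ.2 ∗ φ.1)
      =ᵐ[volume] convKernel (convKernel θ μ) φ := by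
  have hsub₁ := convMeasure_sub_ae (μ := φ.1) (hθ.convMeasure (μ := μ.1) hp1 hp)
    (hθ.convMeasure (μ := μ.2) hp1 hp) hp1 hp
  have hsub₂ := convMeasure_sub_ae (μ := φ.2) (hθ.convMeasure (μ := μ.1) hp1 hp)
    (hθ.convMeasure (μ := μ.2) hp1 hp) hp1 hp
  filter_upwards [convMeasure_add_measure_ae (μ := μ.1 ∗ φ.1) hθ hp1 hp (μ.2 ∗ φ.2),
    convMeasure_add_measure_ae (μ := μ.1 ∗ φ.2) hθ hp1 hp (μ.2 ∗ φ.1),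
    convMeasure_conv_ae (μ := μ.1) hθ hp1 hp φ.1, convMeasure_conv_ae (μ := μ.2) hθ hp1 hp φ.2,
    convMeasure_conv_ae (μ := μ.1) hθ hp1 hp φ.2, convMeasure_conv_ae (μ := μ.2) hθ hp1 hp φ.1,
    hsub₁, hsub₂] with t h₁ h₂ h₃ h₄ h₅ h₆ h₇ h₈
  simp only [convKernel_eq, Pi.add_apply, Pi.sub_apply] at h₁ h₂ h₃ h₄ h₅ h₆ h₇ h₈ ⊢
  rw [h₁, h₂, h₃, h₄, h₅, h₆, h₇, h₈]
  ring

end ConvKernel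

section ConvPow

theorem convKernel_convPow_zero (φp φm : Measure ℝ) (θ : ℝ → ℝ) :
    convKernel θ (convPow φp φm 0) = θ := by
  ext t
  simp [convKernel, convPow]

variable (φp φm : Measure ℝ) [IsFiniteMeasure φp] [IsFiniteMeasure φm]

theorem isFiniteMeasure_convPow (n : ℕ) :
    IsFiniteMeasure (convPow φp φm n).1 ∧ IsFiniteMeasure (convPow φp φm n).2 := by
  induction n with
  | zero => exact ⟨inferInstanceAs (IsFiniteMeasure (Measure.dirac 0)),
      inferInstanceAs (IsFiniteMeasure 0)⟩
  | succ n ih =>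
    have := ih.1
    have := ih.2
    exact ⟨inferInstanceAs (IsFiniteMeasure (_ + _)), inferInstanceAs (IsFiniteMeasure (_ + _))⟩

instance isFiniteMeasure_convPow_fst (n : ℕ) : IsFiniteMeasure (convPow φp φm n).1 :=
  (isFiniteMeasure_convPow φp φm n).1

instance isFiniteMeasure_convPow_snd (n : ℕ) : IsFiniteMeasure (convPow φp φm n).2 :=
  (isFiniteMeasure_convPow φp φm n).2

variable {φp φm} {p : ℝ≥0∞} {θ : ℝ → ℝ}

theorem convKernel_convPow_succ_ae (hθ : MemLp θ p) (hp1 : 1 ≤ p) (hp : p ≠ ∞) (n : ℕ) :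
    convKernel θ (convPow φp φm (n + 1))
      =ᵐ[volume] convKernel (convKernel θ (convPow φp φm n)) (φp, φm) :=
  convKernel_conv_ae (φ := (φp, φm)) hθ hp1 hp

theorem sum_convKernel_convPow_succ_ae (hθ : MemLp θ p) (hp1 : 1 ≤ p) (hp : p ≠ ∞) (N : ℕ) :
    (fun t => ∑ n ∈ Finset.range (N + 1), convKernel θ (convPow φp φm n) t) =ᵐ[volume]
      θ + convKernel (fun t => ∑ n ∈ Finset.range N, convKernel θ (convPow φp φm n) t)
        (φp, φm) := by
  have hstep : ∀ᵐ t, ∀ n ∈ Finset.range N, convKernel θ (convPow φp φm (n + 1)) t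
      = convKernel (convKernel θ (convPow φp φm n)) (φp, φm) t :=
    (ae_ball_iff (Finset.range N).countable_toSet).2 fun n _ =>
      convKernel_convPow_succ_ae hθ hp1 hp n
  filter_upwards [hstep, convKernel_finsetSum_ae (μ := (φp, φm)) (Finset.range N)
    (fun n _ => memLp_convKernel (μ := convPow φp φm n) hθ hp1 hp) hp1 hp] with t hstep hsum
  simp only [Pi.add_apply] at hsum ⊢
  rw [Finset.sum_range_succ', convKernel_convPow_zero, Finset.sum_congr rfl hstep, hsum, add_comm]

end ConvPow

theorem ae_eq_convKernel_add_of_tendsto {p : ℝ≥0∞} {θ ψ : ℝ → ℝ} {μ : Measure ℝ × Measure ℝ}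
    [IsFiniteMeasure μ.1] [IsFiniteMeasure μ.2] {S : ℕ → ℝ → ℝ} (hp1 : 1 ≤ p) (hp : p ≠ ∞)
    (hθ : MemLp θ p) (hψ : MemLp ψ p) (hS : ∀ N, MemLp (S N) p)
    (hrec : ∀ N, S (N + 1) =ᵐ[volume] θ + convKernel (S N) μ)
    (hlim : Tendsto (fun N => eLpNorm (S N - ψ) p) atTop (𝓝 0)) :
    ψ =ᵐ[volume] convKernel ψ μ + θ := by
  set C := μ.1 univ + μ.2 univ
  have hbound : ∀ N, eLpNorm (convKernel ψ μ + θ - ψ) p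
      ≤ eLpNorm (S (N + 1) - ψ) p + C * eLpNorm (S N - ψ) p := by
    intro N
    have hdecomp : convKernel ψ μ + θ - ψ =ᵐ[volume] (S (N + 1) - ψ) + convKernel (ψ - S N) μ := by
      filter_upwards [hrec N, convKernel_sub_ae (μ := μ) hψ (hS N) hp1 hp] with t hrec hsub
      simp only [Pi.add_apply, Pi.sub_apply] at hrec hsub ⊢
      rw [hrec, hsub]
      ring
    calc eLpNorm (convKernel ψ μ + θ - ψ) p volume
        = eLpNorm ((S (N + 1) - ψ) + convKernel (ψ - S N) μ) p volume :=
          eLpNorm_congr_ae hdecomp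
      _ ≤ eLpNorm (S (N + 1) - ψ) p volume + eLpNorm (convKernel (ψ - S N) μ) p volume :=
        eLpNorm_add_le ((hS (N + 1)).sub hψ).aestronglyMeasurable
          (memLp_convKernel (hψ.sub (hS N)) hp1 hp).aestronglyMeasurable hp1
      _ ≤ eLpNorm (S (N + 1) - ψ) p volume + C * eLpNorm (S N - ψ) p volume := by
        rw [eLpNorm_sub_comm (S N)]
        gcongr
        exact eLpNorm_convKernel_le (hψ.sub (hS N)) hp1 hp
  have hbound_lim : Tendsto (fun N => eLpNorm (S (N + 1) - ψ) p + C * eLpNorm (S N - ψ) p)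
      atTop (𝓝 0) := by
    simpa using (hlim.comp (tendsto_add_atTop_nat 1)).add
      (ENNReal.Tendsto.const_mul hlim (Or.inr (by finiteness)))
  have hzero : eLpNorm (convKernel ψ μ + θ - ψ) p = 0 :=
    le_antisymm (ge_of_tendsto' hbound_lim hbound) zero_le
  have hmeas : AEStronglyMeasurable (convKernel ψ μ + θ - ψ) :=
    (((memLp_convKernel hψ hp1 hp).add hθ).sub hψ).aestronglyMeasurable
  filter_upwards [(eLpNorm_eq_zero_iff hmeas (one_pos.trans_le hp1).ne').1 hzero] with t ht
  exact (sub_eq_zero.1 ht).symm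

theorem statement11_general
    (φp φm : Measure ℝ) [IsFiniteMeasure φp] [IsFiniteMeasure φm]
    (θ : ℝ → ℝ) (hθ : MemLp θ 2 volume)
    (ψ : ℝ → ℝ) (hψ : MemLp ψ 2 volume)
    (hlim : Tendsto
      (fun N : ℕ =>
        eLpNorm
          (fun t : ℝ =>
            (∑ n ∈ Finset.range N, convKernel θ (convPow φp φm n) t) - ψ t) 2 volume)
      atTop (𝓝 0)) :
    ∀ᵐ t : ℝ ∂volume,
      ψ t = ((∫ u : ℝ, ψ (t - u) ∂φp) - ∫ u : ℝ, ψ (t - u) ∂φm) + θ t := by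
  have hp : (2 : ℝ≥0∞) ≠ ∞ := ENNReal.ofNat_ne_top
  have hS (N : ℕ) : MemLp (fun t => ∑ n ∈ Finset.range N, convKernel θ (convPow φp φm n) t) 2 :=
    memLp_finsetSum _ fun n _ => memLp_convKernel (μ := convPow φp φm n) hθ one_le_two hp
  exact ae_eq_convKernel_add_of_tendsto (μ := (φp, φm)) one_le_two hp hθ hψ hS
    (sum_convKernel_convPow_succ_ae hθ one_le_two hp) hlim

/-- Theorem 3.1, fixed-point property. Let `φ` be a finite signed measure
on `(0,∞)` with `|φ|((0,∞)) < 1` and `θ ∈ L²` vanishing on `(-∞,0)`. If `ψ ∈ L²` is the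
`L²`-limit of the series `Σₙ θ ∗ φ^{∗n}`, then
`ψ(t) = ∫_{(0,∞)} ψ(t-u) dφ(u) + θ(t)` for Lebesgue-a.e. `t`. -/
theorem statement11
    (φp φm : Measure ℝ) [IsFiniteMeasure φp] [IsFiniteMeasure φm]
    (hsing : φp ⟂ₘ φm) (hconcp : φp (Set.Iic 0) = 0) (hconcm : φm (Set.Iic 0) = 0)
    (hcontr : φp Set.univ + φm Set.univ < 1)
    (θ : ℝ → ℝ) (hθ : MemLp θ 2 volume) (hθ0 : ∀ t : ℝ, t < 0 → θ t = 0)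
    (ψ : ℝ → ℝ) (hψ : MemLp ψ 2 volume)
    (hlim : Tendsto
      (fun N : ℕ =>
        eLpNorm
          (fun t : ℝ =>
            (∑ n ∈ Finset.range N, convKernel θ (convPow φp φm n) t) - ψ t) 2 volume)
      atTop (𝓝 0)) :
    ∀ᵐ t : ℝ ∂volume,
      ψ t = ((∫ u : ℝ, ψ (t - u) ∂φp) - ∫ u : ℝ, ψ (t - u) ∂φm) + θ t :=
  statement11_general φp φm θ hθ ψ hψ hlim
end

section
/- Let β, γ > 0 with β < 1 and α₁, α₂ < 0, and let η be the finite signed measure η(dv) = α₁ δ₀(dv) + (α₂/Γ(β)) v^{β−1} e^{−γv} 1_{(0,∞)}(v) dv. Then for every z ∈ ℂ with Re(z) ≤ 0, the principal-branch power (γ − z)^{−β} has strictly positive real part, and consequently h(z) = −z − α₁ − α₂ (γ − z)^{−β} ≠ 0 for all such z. -/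
/-!
For `Re w > 0` the Laplace transform `∫₀^∞ t^{a-1} e^{-wt} dt` equals `Γ(a) w^{-a}`: both sides are
holomorphic on the right half-plane and agree on `(0, ∞)` by Euler's integral, hence everywhere
by the identity theorem. With `w = γ - z` this gives the closed form of `h`. As `|arg w| < π/2`
and `β < 1`, the argument of `w^{-β}` lies in `(-π/2, π/2)`, so its real part is positive, and
then `Re h(z) = -Re z - α₁ - α₂ Re w^{-β} > 0`.
-/

open MeasureTheory Complex Set Filter
open scoped Real Topology

/-- `h(z) = -z - ∫_{[0,∞)} e^{zv} dη(v)` for the gamma-type delay measure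
`η(dv) = α₁ δ₀(dv) + (α₂/Γ(β)) v^{β-1} e^{-γv} 1_{(0,∞)}(v) dv`. -/
noncomputable def hGamma (α₁ α₂ β γ : ℝ) (z : ℂ) : ℂ :=
  -z - ((α₁ : ℂ) + ∫ v in Set.Ioi (0 : ℝ),
    Complex.exp (z * v) * (((α₂ / Real.Gamma β) * v ^ (β - 1) * Real.exp (-γ * v) : ℝ) : ℂ))

lemma Complex.re_cpow_ofReal_pos {w : ℂ} (hw : 0 < w.re) {s : ℝ} (hs : |s| ≤ 1) :
    0 < (w ^ (s : ℂ)).re := by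
  have hw₀ : w ≠ 0 := fun h ↦ by simp [h] at hw
  have harg : |w.arg| < π / 2 := abs_arg_lt_pi_div_two_iff.mpr (Or.inl hw)
  have him : |(log w * s).im| < π / 2 := by
    rw [im_mul_ofReal, log_im, abs_mul]
    calc |w.arg| * |s| ≤ |w.arg| := mul_le_of_le_one_right (abs_nonneg _) hs
      _ < π / 2 := harg
  rw [cpow_def_of_ne_zero hw₀, exp_re]
  exact mul_pos (Real.exp_pos _) (Real.cos_pos_of_mem_Ioo (abs_lt.mp him))

lemma norm_cpow_sub_one_mul_exp_neg_mul {t : ℝ} (ht : 0 < t) (a w : ℂ) :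
    ‖(t : ℂ) ^ (a - 1) * cexp (-(w * t))‖ = t ^ (a.re - 1) * Real.exp (-(w.re * t)) := by
  rw [norm_mul, norm_cpow_eq_rpow_re_of_pos ht, norm_exp]
  simp

lemma aestronglyMeasurable_cpow_sub_one_mul_exp_neg_mul (a w : ℂ) :
    AEStronglyMeasurable (fun t : ℝ ↦ (t : ℂ) ^ (a - 1) * cexp (-(w * t)))
      (volume.restrict (Ioi 0)) := by
  refine ContinuousOn.aestronglyMeasurable (fun t ht ↦ ContinuousAt.continuousWithinAt ?_)
    measurableSet_Ioi
  exact (continuousAt_ofReal_cpow_const t _ (Or.inr (ne_of_gt ht))).mul (by fun_prop)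

lemma integrableOn_rpow_mul_exp_neg_mul_Ioi {s b : ℝ} (hs : -1 < s) (hb : 0 < b) :
    IntegrableOn (fun t : ℝ ↦ t ^ s * Real.exp (-(b * t))) (Ioi 0) := by
  simpa [Real.rpow_one] using integrableOn_rpow_mul_exp_neg_mul_rpow hs one_pos hb

section LaplaceGammaKernel

variable {a : ℂ}

lemma integrableOn_cpow_sub_one_mul_exp_neg_mul (ha : 0 < a.re) {w : ℂ} (hw : 0 < w.re) :
    IntegrableOn (fun t : ℝ ↦ (t : ℂ) ^ (a - 1) * cexp (-(w * t))) (Ioi 0) := by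
  refine (integrableOn_rpow_mul_exp_neg_mul_Ioi (s := a.re - 1) (by linarith) hw).mono'
    (aestronglyMeasurable_cpow_sub_one_mul_exp_neg_mul a w) ?_
  filter_upwards [ae_restrict_mem measurableSet_Ioi] with t ht
  rw [norm_cpow_sub_one_mul_exp_neg_mul ht]

lemma differentiableOn_integral_cpow_sub_one_mul_exp_neg_mul (ha : 0 < a.re) :
    DifferentiableOn ℂ (fun w : ℂ ↦ ∫ t in Ioi (0 : ℝ), (t : ℂ) ^ (a - 1) * cexp (-(w * t)))
      {w | 0 < w.re} := by
  intro w₀ hw₀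
  set ε := w₀.re / 2 with hε_def
  have hε : 0 < ε := half_pos hw₀
  have hball : ∀ w ∈ Metric.ball w₀ ε, ε ≤ w.re := fun w hw ↦ by
    have := (abs_le.mp ((abs_re_le_norm (w - w₀)).trans (mem_ball_iff_norm.mp hw).le)).1
    simp only [sub_re] at this
    linarith [hε_def]
  refine DifferentiableAt.differentiableWithinAt (hasDerivAt_integral_of_dominated_loc_of_deriv_le
    (F' := fun w (t : ℝ) ↦ (t : ℂ) ^ (a - 1) * (cexp (-(w * t)) * -t))
    (bound := fun t ↦ t ^ a.re * Real.exp (-(ε * t)))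
    (Metric.ball_mem_nhds w₀ hε)
    (.of_forall fun w ↦ aestronglyMeasurable_cpow_sub_one_mul_exp_neg_mul a w)
    (integrableOn_cpow_sub_one_mul_exp_neg_mul ha hw₀) ?_ ?_
    (integrableOn_rpow_mul_exp_neg_mul_Ioi (by linarith) hε) ?_).2.differentiableAt
  · refine ((aestronglyMeasurable_cpow_sub_one_mul_exp_neg_mul a w₀).mul
      (continuous_ofReal.neg.aestronglyMeasurable)).congr (.of_forall fun t ↦ ?_)
    simp only [Pi.mul_apply, Pi.neg_apply, mul_assoc]
  · filter_upwards [ae_restrict_mem measurableSet_Ioi] with t (ht : 0 < t) w hw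
    rw [← mul_assoc, norm_mul, norm_cpow_sub_one_mul_exp_neg_mul ht, norm_neg, norm_real,
      Real.norm_of_nonneg ht.le]
    calc t ^ (a.re - 1) * Real.exp (-(w.re * t)) * t = t ^ a.re * Real.exp (-(w.re * t)) := by
          rw [mul_right_comm, ← Real.rpow_add_one ht.ne', sub_add_cancel]
      _ ≤ t ^ a.re * Real.exp (-(ε * t)) := by
          gcongr
          exact hball w hw
  · exact .of_forall fun t w _ ↦ (((hasDerivAt_mul_const (t : ℂ)).neg).cexp).const_mul _

lemma integral_cpow_sub_one_mul_exp_neg_mul_Ioi (ha : 0 < a.re) {w : ℂ} (hw : 0 < w.re) :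
    ∫ t in Ioi (0 : ℝ), (t : ℂ) ^ (a - 1) * cexp (-(w * t)) = Gamma a * w ^ (-a) := by
  have hU : IsOpen {w : ℂ | 0 < w.re} := isOpen_lt continuous_const continuous_re
  have hF := (differentiableOn_integral_cpow_sub_one_mul_exp_neg_mul ha).analyticOnNhd hU
  have hG : AnalyticOnNhd ℂ (fun w : ℂ ↦ Gamma a * w ^ (-a)) {w | 0 < w.re} :=
    DifferentiableOn.analyticOnNhd (fun w hw ↦ ((differentiableAt_id.cpow_const
      (Or.inl hw)).const_mul _).differentiableWithinAt) hU
  have hreal : ∃ᶠ w in 𝓝[≠] (1 : ℂ),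
      ∫ t in Ioi (0 : ℝ), (t : ℂ) ^ (a - 1) * cexp (-(w * t)) = Gamma a * w ^ (-a) := by
    have hmap : Tendsto ((↑) : ℝ → ℂ) (𝓝[≠] 1) (𝓝[≠] 1) := by
      simpa using continuous_ofReal.continuousWithinAt.tendsto_nhdsWithin (x := 1)
        (t := {(1 : ℂ)}ᶜ) fun r hr ↦ by simpa using hr
    refine hmap.frequently (Eventually.frequently ?_)
    filter_upwards [eventually_nhdsWithin_of_eventually_nhds (lt_mem_nhds one_pos)] with r hr
    rw [integral_cpow_mul_exp_neg_mul_Ioi ha hr, one_div, inv_cpow_ofReal_nonneg hr.le, cpow_neg,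
      mul_comm]
  exact hF.eqOn_of_preconnected_of_frequently_eq hG (convex_halfSpace_re_gt 0).isPreconnected
    (by simp) hreal hw

end LaplaceGammaKernel

lemma hGamma_eq {α₁ α₂ β γ : ℝ} (hβ : 0 < β) {z : ℂ} (hz : 0 < ((γ : ℂ) - z).re) :
    hGamma α₁ α₂ β γ z = -z - α₁ - α₂ * ((γ : ℂ) - z) ^ (-β : ℂ) := by
  have hkernel : ∀ v ∈ Ioi (0 : ℝ),
      cexp (z * v) * (((α₂ / Real.Gamma β) * v ^ (β - 1) * Real.exp (-γ * v) : ℝ) : ℂ) =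
        (α₂ / Real.Gamma β : ℂ) * ((v : ℂ) ^ ((β : ℂ) - 1) * cexp (-(((γ : ℂ) - z) * v))) := by
    intro v hv
    have hexp : cexp (-(((γ : ℂ) - z) * v)) = cexp (z * v) * cexp (-γ * v) := by
      rw [← Complex.exp_add]; ring_nf
    push_cast [ofReal_cpow (le_of_lt hv), hexp]
    ring
  have hΓ : (Real.Gamma β : ℂ) ≠ 0 := ofReal_ne_zero.mpr (Real.Gamma_pos_of_pos hβ).ne'
  rw [hGamma, setIntegral_congr_fun measurableSet_Ioi hkernel, integral_const_mul,
    integral_cpow_sub_one_mul_exp_neg_mul_Ioi (by simpa using hβ) hz, Gamma_ofReal]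
  field_simp
  ring

/-- Example 2.10, case `β < 1`. Let `0 < β < 1`, `γ > 0` and
`α₁, α₂ < 0`. Then for every `z` with `Re z ≤ 0` the principal-branch power `(γ - z)^{-β}`
has strictly positive real part, and consequently
`h(z) = -z - α₁ - α₂ (γ - z)^{-β} ≠ 0` for all such `z`. -/
theorem statement16
    (α₁ α₂ β γ : ℝ) (hβ : 0 < β) (hβ1 : β < 1) (hγ : 0 < γ)
    (hα₁ : α₁ < 0) (hα₂ : α₂ < 0) :
    ∀ z : ℂ, z.re ≤ 0 →
      0 < (((γ : ℂ) - z) ^ (-β : ℂ)).re ∧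
      hGamma α₁ α₂ β γ z = -z - (α₁ : ℂ) - (α₂ : ℂ) * ((γ : ℂ) - z) ^ (-β : ℂ) ∧
      hGamma α₁ α₂ β γ z ≠ 0 := by
  intro z hz
  have hw : 0 < ((γ : ℂ) - z).re := by simp only [sub_re, ofReal_re]; linarith
  have hpow : 0 < (((γ : ℂ) - z) ^ (-β : ℂ)).re := by
    simpa using re_cpow_ofReal_pos hw (s := -β) (by rw [abs_neg, abs_of_pos hβ]; exact hβ1.le)
  have hh := hGamma_eq (α₁ := α₁) (α₂ := α₂) hβ hw
  refine ⟨hpow, hh, fun h0 ↦ ?_⟩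
  have hre := congrArg re (hh.symm.trans h0)
  simp only [sub_re, neg_re, ofReal_re, re_ofReal_mul, zero_re] at hre
  nlinarith
end
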